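/- (a) If a theory graph is well-formed relative to any foundation, then it is structurally well-formed. (b) If TG is structurally well-formed, then the judgment 'ω is a structurally well-formed term over TG and T' is independent of the foundation. -/

import Mathlib

/-!
A formalization of the MMT module system (Rabe & Kohlhase, "A Scalable Module System").

We formalize the MMT syntax (terms, morphisms, symbols, assignments, modules, theory
graphs), the elaboration judgments (valid theories, links, induced constants and induced
assignments), clash-freeness, normalization, structurally well-formed terms, well-typed
morphisms and extensional morphism equality, foundations and regular foundations, and the
well-formedness inference system for theory graphs.
-/

set_option autoImplicit false

namespace MMT

/-! ### Identifiers -/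

/-- Qualified local identifiers `i/j/…` (nonempty lists in practice). -/
abbrev LocalName := List String

/-- Module identifiers. -/
abbrev MId := List String

/-- Identifiers of links: views, and structures `T/i` declared in a theory `T`. -/
inductive LinkId where
  | view : MId → LinkId
  | struc : MId → LocalName → LinkId

/-- Morphisms: identity, links (atomic morphisms), diagrammatic composition `μ;μ'`. -/
inductive Mor where
  | ident : MId → Mor
  | link : LinkId → Mor
  | comp : Mor → Mor → Mor

/-- Terms: the filtered term `⊤`, constants `T?c`, variables, application, binding
(with optional type and definiens of the bound variable), and morphism application `ω^μ`. -/
inductive Term where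
  | hidden : Term
  | const : MId → LocalName → Term
  | var : String → Term
  | app : Term → Term → Term
  | bind : Term → String → Option Term → Option Term → Term → Term
  | morApp : Term → Mor → Term

/-- Variable contexts `Υ`. -/
abbrev Ctx := List (String × Option Term × Option Term)

/-- Application of a morphism to an optional term (`⊥^μ = ⊥`). -/
def morAppO (o : Option Term) (μ : Mor) : Option Term :=
  match o with
  | none => none
  | some t => some (Term.morApp t μ)

/-- Assignments in link bodies: `c ↦ ω` to constants and `i ↦ μ` to structures. -/
inductive Assignment where
  | constAss : LocalName → Term → Assignment
  | structAss : LocalName → Mor → Assignment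

/-- Symbols in theory bodies: constants `c : τ = δ` (type and definiens optional),
structures `i : S = {σ}` (with optional meta-morphism), and defined structures `i : S = μ`. -/
inductive Symbol where
  | const : LocalName → Option Term → Option Term → Symbol
  | struct : LocalName → MId → Option Mor → List Assignment → Symbol
  | structDef : LocalName → MId → Mor → Symbol

/-- Modules: theories `T = {θ}` (with optional meta-theory), views `v : S → T = {σ}`
(with optional meta-morphism), and defined views `v : S → T = μ`. -/
inductive Module where
  | thy : MId → Option MId → List Symbol → Module
  | view : MId → MId → MId → Option Mor → List Assignment → Module
  | viewDef : MId → MId → MId → Mor → Module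

/-- Theory graphs are lists of modules. -/
abbrev TheoryGraph := List Module

/-- The definiens of a link: a list of assignments `{σ}` or a morphism `μ`. -/
inductive LinkBody where
  | assignments : List Assignment → LinkBody
  | defined : Mor → LinkBody

/-! ### Names and clash-freeness -/

def Symbol.name : Symbol → LocalName
  | .const c _ _ => c
  | .struct i _ _ _ => i
  | .structDef i _ _ => i

def Assignment.name : Assignment → LocalName
  | .constAss c _ => c
  | .structAss i _ => i

def Module.name : Module → MId
  | .thy T _ _ => T
  | .view v _ _ _ _ => v
  | .viewDef v _ _ _ => v

def Module.bodyNames : Module → List LocalName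
  | .thy _ _ θ => θ.map Symbol.name
  | .view _ _ _ _ σ => σ.map Assignment.name
  | .viewDef _ _ _ _ => []

/-- `i` and `j` clash if `i = j` or `j` is of the form `i/j'`. -/
def NameClash (i j : LocalName) : Prop :=
  i = j ∨ ∃ j', j' ≠ [] ∧ j = i ++ j'

/-- Module-level clash: equal names, or the name of `N` is of the form `i/j'` where
`i` is the name of `M` and the body of `M` contains a declaration for the name `j'`. -/
def ModClash (M N : Module) : Prop :=
  M.name = N.name ∨ ∃ j', j' ≠ [] ∧ N.name = M.name ++ j' ∧ j' ∈ M.bodyNames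

/-- Clash-freeness of a theory graph. -/
def ClashFree (TG : TheoryGraph) : Prop :=
  TG.Pairwise (fun M N => ¬ ModClash M N ∧ ¬ ModClash N M) ∧
  ∀ M ∈ TG, M.bodyNames.Pairwise (fun i j => ¬ NameClash i j ∧ ¬ NameClash j i)

/-! ### Elaboration judgments -/

/-- `T` is a theory of `TG` with body `θ`. -/
def ElabThy (TG : TheoryGraph) (T : MId) (θ : List Symbol) : Prop :=
  ∃ mt, Module.thy T mt θ ∈ TG

/-- `M` is the meta-theory of `T`. -/
def HasMeta (TG : TheoryGraph) (T M : MId) : Prop :=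
  ∃ θ, Module.thy T (some M) θ ∈ TG

/-- `θ` declares a structure named `i` with domain `S`. -/
def StructIn (θ : List Symbol) (i : LocalName) (S : MId) : Prop :=
  (∃ mt σ, Symbol.struct i S mt σ ∈ θ) ∨ (∃ μ, Symbol.structDef i S μ ∈ θ)

/-- `l` is a link of `TG` from `S` to `T` with definiens `B`
(rules ELviewdef, ELview, ELstrdef, ELstr, ELindstr). -/
inductive ElabLink (TG : TheoryGraph) : LinkId → MId → MId → LinkBody → Prop where
  | viewDef : ∀ (v S T : MId) (μ : Mor), Module.viewDef v S T μ ∈ TG →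
      ElabLink TG (.view v) S T (.defined μ)
  | view : ∀ (v S T : MId) (mt : Option Mor) (σ : List Assignment),
      Module.view v S T mt σ ∈ TG → ElabLink TG (.view v) S T (.assignments σ)
  | strDef : ∀ (T : MId) (θ : List Symbol) (i : LocalName) (S : MId) (μ : Mor),
      ElabThy TG T θ → Symbol.structDef i S μ ∈ θ →
      ElabLink TG (.struc T i) S T (.defined μ)
  | str : ∀ (T : MId) (θ : List Symbol) (i : LocalName) (S : MId) (mt : Option Mor)
      (σ : List Assignment), ElabThy TG T θ → Symbol.struct i S mt σ ∈ θ →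
      ElabLink TG (.struc T i) S T (.assignments σ)
  | indStr : ∀ (T : MId) (θ : List Symbol) (i : LocalName) (S : MId)
      (h : LocalName) (R : MId) (B : LinkBody),
      ElabThy TG T θ → StructIn θ i S → ElabLink TG (.struc S h) R S B →
      ElabLink TG (.struc T (i ++ h)) R T
        (.defined (Mor.comp (Mor.link (.struc S h)) (Mor.link (.struc T i))))

/-- `μ` is the meta-morphism of the link `l`. -/
def HasMetaMor (TG : TheoryGraph) (l : LinkId) (μ : Mor) : Prop :=
  match l with
  | .view v => ∃ S T σ, Module.view v S T (some μ) σ ∈ TG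
  | .struc T i => ∃ θ S σ, ElabThy TG T θ ∧ Symbol.struct i S (some μ) σ ∈ θ

/-- `D` is `S` or a (possibly indirect) meta-theory of `S`. -/
inductive MetaStar (TG : TheoryGraph) : MId → MId → Prop where
  | refl : ∀ T, MetaStar TG T T
  | step : ∀ T M D, HasMeta TG T M → MetaStar TG M D → MetaStar TG T D

/-- The constant `c` is covered by the assignments `σ` (explicitly or via a structure
assignment). -/
def Covered (σ : List Assignment) (c : LocalName) : Prop :=
  (∃ ω, Assignment.constAss c ω ∈ σ) ∨
  (∃ h μ c', Assignment.structAss h μ ∈ σ ∧ c = h ++ c')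

mutual
/-- `c : τ = δ` is an induced constant of the theory `T`
(rules ELcon, ELindcondef, ELindconelse, ELindconass). -/
inductive ElabSym (TG : TheoryGraph) : MId → LocalName → Option Term → Option Term → Prop where
  | con : ∀ (T : MId) (θ : List Symbol) (c : LocalName) (τ δ : Option Term),
      ElabThy TG T θ → Symbol.const c τ δ ∈ θ → ElabSym TG T c τ δ
  | indConDef : ∀ (T : MId) (i : LocalName) (S : MId) (B : LinkBody) (c : LocalName)
      (τ : Option Term) (δ : Term),
      ElabLink TG (.struc T i) S T B → ElabSym TG S c τ (some δ) →
      ElabSym TG T (i ++ c) (morAppO τ (.link (.struc T i)))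
        (some (Term.morApp δ (.link (.struc T i))))
  | indConElse : ∀ (T : MId) (i : LocalName) (S : MId) (B : LinkBody) (c : LocalName)
      (τ : Option Term),
      ElabLink TG (.struc T i) S T B → ElabSym TG S c τ none →
      ElabAss TG (.struc T i) c (Term.const T (i ++ c)) →
      ElabSym TG T (i ++ c) (morAppO τ (.link (.struc T i))) none
  | indConAss : ∀ (T : MId) (i : LocalName) (S : MId) (B : LinkBody) (c : LocalName)
      (τ : Option Term) (δ : Term),
      ElabLink TG (.struc T i) S T B → ElabSym TG S c τ none →
      ElabAss TG (.struc T i) c δ → δ ≠ Term.const T (i ++ c) →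
      ElabSym TG T (i ++ c) (morAppO τ (.link (.struc T i))) (some δ)

/-- `c ↦ δ` is an induced constant assignment of the link `l`
(rules ELassdeflink, ELass, ELindass, ELdefassstr, ELdefassview). -/
inductive ElabAss (TG : TheoryGraph) : LinkId → LocalName → Term → Prop where
  | defLink : ∀ (l : LinkId) (S T : MId) (μ : Mor) (c : LocalName) (τ : Option Term),
      ElabLink TG l S T (.defined μ) → ElabSym TG S c τ none →
      ElabAss TG l c (Term.morApp (Term.const S c) μ)
  | ass : ∀ (l : LinkId) (S T : MId) (σ : List Assignment) (c : LocalName) (ω : Term),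
      ElabLink TG l S T (.assignments σ) → Assignment.constAss c ω ∈ σ →
      ElabAss TG l c ω
  | indAss : ∀ (l : LinkId) (S T : MId) (σ : List Assignment) (h : LocalName) (R : MId)
      (B : LinkBody) (c : LocalName) (τ : Option Term) (μ : Mor),
      ElabLink TG l S T (.assignments σ) → ElabLink TG (.struc S h) R S B →
      ElabSym TG S (h ++ c) τ none → Assignment.structAss h μ ∈ σ →
      ElabAss TG l (h ++ c) (Term.morApp (Term.const R c) μ)
  | defAssStr : ∀ (T : MId) (i : LocalName) (S : MId) (σ : List Assignment)
      (c : LocalName) (τ : Option Term),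
      ElabLink TG (.struc T i) S T (.assignments σ) → ElabSym TG S c τ none →
      ¬ Covered σ c → ElabAss TG (.struc T i) c (Term.const T (i ++ c))
  | defAssView : ∀ (v : MId) (S T : MId) (σ : List Assignment) (c : LocalName)
      (τ : Option Term),
      ElabLink TG (.view v) S T (.assignments σ) → ElabSym TG S c τ none →
      ¬ Covered σ c → ElabAss TG (.view v) c Term.hidden
end

/-! ### Normalization -/

mutual
/-- Normalization `⟦ω⟧ = n` as a relation: it eliminates all morphism applications,
expands all definitions, and enforces strictness of filtering. -/
inductive Normal (TG : TheoryGraph) : Term → Term → Prop where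
  | hidden : Normal TG Term.hidden Term.hidden
  | var : ∀ x, Normal TG (Term.var x) (Term.var x)
  | constDef : ∀ (T : MId) (c : LocalName) (τ : Option Term) (δ n : Term),
      ElabSym TG T c τ (some δ) → Normal TG δ n → Normal TG (Term.const T c) n
  | constUndef : ∀ (T : MId) (c : LocalName) (τ : Option Term),
      ElabSym TG T c τ none → Normal TG (Term.const T c) (Term.const T c)
  | app : ∀ f nf a na, Normal TG f nf → Normal TG a na →
      nf ≠ Term.hidden → na ≠ Term.hidden →
      Normal TG (Term.app f a) (Term.app nf na)
  | appHidden : ∀ f nf a na, Normal TG f nf → Normal TG a na →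
      (nf = Term.hidden ∨ na = Term.hidden) →
      Normal TG (Term.app f a) Term.hidden
  | bind : ∀ b nb x tp ntp df ndf s ns,
      Normal TG b nb → NormalO TG tp ntp → NormalO TG df ndf → Normal TG s ns →
      nb ≠ Term.hidden → ntp ≠ some Term.hidden → ndf ≠ some Term.hidden →
      ns ≠ Term.hidden →
      Normal TG (Term.bind b x tp df s) (Term.bind nb x ntp ndf ns)
  | bindHidden : ∀ b nb x tp ntp df ndf s ns,
      Normal TG b nb → NormalO TG tp ntp → NormalO TG df ndf → Normal TG s ns →
      (nb = Term.hidden ∨ ntp = some Term.hidden ∨ ndf = some Term.hidden ∨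
        ns = Term.hidden) →
      Normal TG (Term.bind b x tp df s) Term.hidden
  | morIdent : ∀ (t n : Term) (T : MId),
      Normal TG t n → Normal TG (Term.morApp t (Mor.ident T)) n
  | morComp : ∀ (t n : Term) (μ μ' : Mor),
      Normal TG (Term.morApp (Term.morApp t μ) μ') n →
      Normal TG (Term.morApp t (Mor.comp μ μ')) n
  | linkHidden : ∀ l : LinkId, Normal TG (Term.morApp Term.hidden (Mor.link l)) Term.hidden
  | linkVar : ∀ (x : String) (l : LinkId),
      Normal TG (Term.morApp (Term.var x) (Mor.link l)) (Term.var x)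
  | linkApp : ∀ (f a n : Term) (l : LinkId),
      Normal TG (Term.app (Term.morApp f (Mor.link l)) (Term.morApp a (Mor.link l))) n →
      Normal TG (Term.morApp (Term.app f a) (Mor.link l)) n
  | linkBind : ∀ (b : Term) (x : String) (tp df : Option Term) (s n : Term) (l : LinkId),
      Normal TG (Term.bind (Term.morApp b (Mor.link l)) x
        (morAppO tp (Mor.link l)) (morAppO df (Mor.link l))
        (Term.morApp s (Mor.link l))) n →
      Normal TG (Term.morApp (Term.bind b x tp df s) (Mor.link l)) n
  | linkMor : ∀ (t m n : Term) (μ : Mor) (l : LinkId),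
      Normal TG (Term.morApp t μ) m →
      Normal TG (Term.morApp m (Mor.link l)) n →
      Normal TG (Term.morApp (Term.morApp t μ) (Mor.link l)) n
  | linkConstDef : ∀ (D : MId) (c : LocalName) (τ : Option Term) (δ n : Term) (l : LinkId),
      ElabSym TG D c τ (some δ) →
      Normal TG (Term.morApp δ (Mor.link l)) n →
      Normal TG (Term.morApp (Term.const D c) (Mor.link l)) n
  | linkConstMeta : ∀ (D : MId) (c : LocalName) (τ : Option Term) (l : LinkId)
      (S T : MId) (B : LinkBody) (μ : Mor) (n : Term),
      ElabSym TG D c τ none → ElabLink TG l S T B → D ≠ S →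
      HasMetaMor TG l μ → Normal TG (Term.morApp (Term.const D c) μ) n →
      Normal TG (Term.morApp (Term.const D c) (Mor.link l)) n
  | linkConstAss : ∀ (D : MId) (c : LocalName) (τ : Option Term) (l : LinkId)
      (T : MId) (B : LinkBody) (δ n : Term),
      ElabSym TG D c τ none → ElabLink TG l D T B →
      ElabAss TG l c δ → Normal TG δ n →
      Normal TG (Term.morApp (Term.const D c) (Mor.link l)) n

/-- Normalization of optional terms. -/
inductive NormalO (TG : TheoryGraph) : Option Term → Option Term → Prop where
  | none : NormalO TG none none
  | some : ∀ t n, Normal TG t n → NormalO TG (some t) (some n)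
end

/-! ### Well-typed morphisms -/

/-- `μ` is a well-typed morphism from `S` to `T`
(rules TMmor, TMid, TMcomp, TMcontravariant, TMcovariant). -/
inductive Morphism (TG : TheoryGraph) : Mor → MId → MId → Prop where
  | link : ∀ (l : LinkId) (S T : MId) (B : LinkBody),
      ElabLink TG l S T B → Morphism TG (Mor.link l) S T
  | ident : ∀ T : MId, (∃ θ, ElabThy TG T θ) → Morphism TG (Mor.ident T) T T
  | comp : ∀ (μ μ' : Mor) (R S T : MId),
      Morphism TG μ R S → Morphism TG μ' S T → Morphism TG (Mor.comp μ μ') R T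
  | contra : ∀ (μ : Mor) (S M T : MId),
      HasMeta TG S M → Morphism TG μ S T → Morphism TG μ M T
  | covar : ∀ (μ : Mor) (S M T : MId),
      Morphism TG μ S M → HasMeta TG T M → Morphism TG μ S T

/-! ### Structurally well-formed terms -/

mutual
/-- Well-formed contexts (rules TOemptycon, TOvardec). -/
inductive WFCtx (TG : TheoryGraph) : MId → Ctx → Prop where
  | nil : ∀ T : MId, (∃ θ, ElabThy TG T θ) → WFCtx TG T []
  | cons : ∀ (T : MId) (Γ : Ctx) (x : String) (tp df : Option Term),
      WFCtx TG T Γ →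
      (∀ t, tp = some t → WFTerm TG T Γ t) →
      (∀ d, df = some d → WFTerm TG T Γ d) →
      WFCtx TG T (Γ ++ [(x, tp, df)])

/-- `ω` is structurally well-formed over `TG`, `T`, and `Γ`
(rules TOvar, TOsym, TOspecial, TOapp, TObind, TOmor, TOmeta). -/
inductive WFTerm (TG : TheoryGraph) : MId → Ctx → Term → Prop where
  | var : ∀ (T : MId) (Γ : Ctx) (x : String) (tp df : Option Term),
      WFCtx TG T Γ → (x, tp, df) ∈ Γ → WFTerm TG T Γ (Term.var x)
  | sym : ∀ (T : MId) (Γ : Ctx) (c : LocalName) (τ δ : Option Term),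
      WFCtx TG T Γ → ElabSym TG T c τ δ → WFTerm TG T Γ (Term.const T c)
  | special : ∀ (T : MId) (Γ : Ctx), WFCtx TG T Γ → WFTerm TG T Γ Term.hidden
  | app : ∀ (T : MId) (Γ : Ctx) (f a : Term),
      WFTerm TG T Γ f → WFTerm TG T Γ a → WFTerm TG T Γ (Term.app f a)
  | bind : ∀ (T : MId) (Γ : Ctx) (b : Term) (x : String) (tp df : Option Term) (s : Term),
      WFTerm TG T Γ b → WFCtx TG T (Γ ++ [(x, tp, df)]) →
      WFTerm TG T (Γ ++ [(x, tp, df)]) s →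
      WFTerm TG T Γ (Term.bind b x tp df s)
  | mor : ∀ (T : MId) (Γ : Ctx) (S : MId) (ω : Term) (μ : Mor),
      WFCtx TG T Γ → WFTerm TG S [] ω → Morphism TG μ S T →
      WFTerm TG T Γ (Term.morApp ω μ)
  | meta_ : ∀ (T : MId) (Γ : Ctx) (M : MId) (ω : Term),
      WFTerm TG M Γ ω → HasMeta TG T M → WFTerm TG T Γ ω
end

/-! ### Flat syntax -/

mutual
/-- A term is flat (contains no morphism applications). -/
inductive Term.NoMorApp : Term → Prop where
  | hidden : Term.NoMorApp Term.hidden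
  | const : ∀ (T : MId) (c : LocalName), Term.NoMorApp (Term.const T c)
  | var : ∀ x, Term.NoMorApp (Term.var x)
  | app : ∀ f a, Term.NoMorApp f → Term.NoMorApp a → Term.NoMorApp (Term.app f a)
  | bind : ∀ b x tp df s, Term.NoMorApp b → Term.NoMorAppO tp → Term.NoMorAppO df →
      Term.NoMorApp s → Term.NoMorApp (Term.bind b x tp df s)

inductive Term.NoMorAppO : Option Term → Prop where
  | none : Term.NoMorAppO none
  | some : ∀ t, Term.NoMorApp t → Term.NoMorAppO (some t)
end

def Symbol.isFlat : Symbol → Prop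
  | .const _ τ δ => Term.NoMorAppO τ ∧ Term.NoMorAppO δ
  | .struct _ _ _ _ => False
  | .structDef _ _ _ => False

def Assignment.isFlat : Assignment → Prop
  | .constAss _ ω => Term.NoMorApp ω
  | .structAss _ _ => False

def Module.isFlat : Module → Prop
  | .thy _ _ θ => ∀ s ∈ θ, s.isFlat
  | .view _ _ _ _ σ => ∀ a ∈ σ, a.isFlat
  | .viewDef _ _ _ _ => True

/-- A theory graph is flat: no structures, no structure assignments, no morphism
applications in terms. -/
def FlatGraph (TG : TheoryGraph) : Prop := ∀ M ∈ TG, M.isFlat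

/-- `T` is a flat theory of `TG`. -/
def FlatThy (TG : TheoryGraph) (T : MId) : Prop :=
  ∃ θ, ElabThy TG T θ ∧ ∀ s ∈ θ, s.isFlat

/-! ### Foundations -/

/-- A foundation is a definition of the typing judgment and the equality judgment
(on optional terms, so that absent types/definientia `⊥` are covered). -/
structure Foundation where
  typed : TheoryGraph → MId → Ctx → Option Term → Option Term → Prop
  equal : TheoryGraph → MId → Ctx → Option Term → Option Term → Prop

/-- Declaration-wise equality of contexts. -/
def CtxEq (F : Foundation) (TG : TheoryGraph) (T : MId) (Γ₀ Γ₁ Γ₂ : Ctx) : Prop :=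
  Γ₁.length = Γ₂.length ∧
  ∀ (i : ℕ) (h1 : i < Γ₁.length) (h2 : i < Γ₂.length),
    (Γ₁.get ⟨i, h1⟩).1 = (Γ₂.get ⟨i, h2⟩).1 ∧
    F.equal TG T (Γ₀ ++ Γ₁.take i) (Γ₁.get ⟨i, h1⟩).2.1 (Γ₂.get ⟨i, h2⟩).2.1 ∧
    F.equal TG T (Γ₀ ++ Γ₁.take i) (Γ₁.get ⟨i, h1⟩).2.2 (Γ₂.get ⟨i, h2⟩).2.2

/-- A mapping of constant identifiers to terms. -/
def ConstMap := MId → LocalName → Term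

/-- Homomorphic extension of a constant mapping to terms. -/
def mapTerm (f : ConstMap) : Term → Term
  | .hidden => .hidden
  | .const D c => f D c
  | .var x => .var x
  | .app a b => .app (mapTerm f a) (mapTerm f b)
  | .bind b x tp df s =>
      .bind (mapTerm f b) x
        (match tp with | none => none | some t => some (mapTerm f t))
        (match df with | none => none | some t => some (mapTerm f t))
        (mapTerm f s)
  | .morApp t μ => .morApp (mapTerm f t) μ

def mapTermO (f : ConstMap) : Option Term → Option Term
  | none => none
  | some t => some (mapTerm f t)

/-- Regular foundations: the equality judgment respects normalization, is a congruent
equivalence relation, and typing and equality of flat terms are preserved along flat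
type- and definiens-preserving constant mappings. -/
structure Regular (F : Foundation) : Prop where
  equal_undef : ∀ TG T Γ, F.equal TG T Γ none none
  respects_norm : ∀ TG T ω n, Normal TG ω n → F.equal TG T [] (some ω) (some n)
  equal_refl : ∀ TG T Γ ω, F.equal TG T Γ ω ω
  equal_symm : ∀ TG T Γ ω ω', F.equal TG T Γ ω ω' → F.equal TG T Γ ω' ω
  equal_trans : ∀ TG T Γ ω₁ ω₂ ω₃,
      F.equal TG T Γ ω₁ ω₂ → F.equal TG T Γ ω₂ ω₃ → F.equal TG T Γ ω₁ ω₃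
  congr_app : ∀ TG T Γ f f' a a',
      F.equal TG T Γ (some f) (some f') → F.equal TG T Γ (some a) (some a') →
      F.equal TG T Γ (some (Term.app f a)) (some (Term.app f' a'))
  congr_bind : ∀ TG T Γ b b' x tp tp' df df' s s',
      F.equal TG T Γ (some b) (some b') → F.equal TG T Γ tp tp' →
      F.equal TG T Γ df df' →
      F.equal TG T (Γ ++ [(x, tp, df)]) (some s) (some s') →
      F.equal TG T Γ (some (Term.bind b x tp df s)) (some (Term.bind b' x tp' df' s'))
  congr_typed : ∀ TG T Γ ω₁ ω₁' ω₂ ω₂',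
      F.equal TG T Γ ω₁ ω₁' → F.equal TG T Γ ω₂ ω₂' →
      F.typed TG T Γ ω₁ ω₂ → F.typed TG T Γ ω₁' ω₂'
  ctx_equal : ∀ TG T Γ Γ' ω₁ ω₂, CtxEq F TG T [] Γ Γ' →
      F.equal TG T Γ ω₁ ω₂ → F.equal TG T Γ' ω₁ ω₂
  ctx_typed : ∀ TG T Γ Γ' ω₁ ω₂, CtxEq F TG T [] Γ Γ' →
      F.typed TG T Γ ω₁ ω₂ → F.typed TG T Γ' ω₁ ω₂
  preserve_typed : ∀ TG S T (f : ConstMap), FlatThy TG S → FlatThy TG T →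
      (∀ D c τ δ, MetaStar TG S D → ElabSym TG D c τ δ →
        F.typed TG T [] (some (f D c)) (mapTermO f τ) ∧
        F.equal TG T [] (some (f D c)) (mapTermO f δ)) →
      ∀ ω₁ ω₂, Term.NoMorApp ω₁ → Term.NoMorApp ω₂ →
        WFTerm TG S [] ω₁ → WFTerm TG S [] ω₂ →
        F.typed TG S [] (some ω₁) (some ω₂) →
        F.typed TG T [] (some (mapTerm f ω₁)) (some (mapTerm f ω₂))
  preserve_equal : ∀ TG S T (f : ConstMap), FlatThy TG S → FlatThy TG T →
      (∀ D c τ δ, MetaStar TG S D → ElabSym TG D c τ δ →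
        F.typed TG T [] (some (f D c)) (mapTermO f τ) ∧
        F.equal TG T [] (some (f D c)) (mapTermO f δ)) →
      ∀ ω₁ ω₂, Term.NoMorApp ω₁ → Term.NoMorApp ω₂ →
        WFTerm TG S [] ω₁ → WFTerm TG S [] ω₂ →
        F.equal TG S [] (some ω₁) (some ω₂) →
        F.equal TG T [] (some (mapTerm f ω₁)) (some (mapTerm f ω₂))

/-! ### Morphism equality (rule TMequal) -/

/-- `μ` and `μ'` are equal as morphisms from `S` to `T`: both are well-typed, they map
every undefined constant of `S` to equal terms, and their restrictions to the meta-theory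
of `S` (if any) are equal. -/
inductive MorEq (F : Foundation) (TG : TheoryGraph) : Mor → Mor → MId → MId → Prop where
  | mk : ∀ (μ μ' : Mor) (S T : MId),
      Morphism TG μ S T → Morphism TG μ' S T →
      (∀ c τ, ElabSym TG S c τ none →
        F.equal TG T [] (some (Term.morApp (Term.const S c) μ))
          (some (Term.morApp (Term.const S c) μ'))) →
      (∀ M, HasMeta TG S M → MorEq F TG μ μ' M T) →
      MorEq F TG μ μ' S T

/-! ### Totality -/

/-- A morphism `μ` with domain `S` is total if it filters no (possibly induced, possibly
inherited from a meta-theory) constant of `S`. -/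
def Total (TG : TheoryGraph) (μ : Mor) (S : MId) : Prop :=
  ∀ D c τ δ, MetaStar TG S D → ElabSym TG D c τ δ →
    ∀ n, Normal TG (Term.morApp (Term.const D c) μ) n → n ≠ Term.hidden

/-- A theory graph is total if all its links are total morphisms. -/
def TotalGraph (TG : TheoryGraph) : Prop :=
  ∀ (l : LinkId) (S T : MId) (B : LinkBody), ElabLink TG l S T B →
    Total TG (Mor.link l) S

/-! ### Well-formed theory graphs -/

/-- The extension of the last link of a theory graph by one more assignment:
`Extends TG l S T σ ext` states that `l : S → T` with current body `σ` is the last link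
of `TG` and that `ext a` is `TG` with `a` appended to the body of `l`. -/
inductive Extends : TheoryGraph → LinkId → MId → MId → List Assignment →
    (Assignment → TheoryGraph) → Prop where
  | view : ∀ (TG : TheoryGraph) (v S T : MId) (mt : Option Mor) (σ : List Assignment),
      Extends (TG ++ [Module.view v S T mt σ]) (.view v) S T σ
        (fun a => TG ++ [Module.view v S T mt (σ ++ [a])])
  | str : ∀ (TG : TheoryGraph) (T : MId) (mtT : Option MId) (θ : List Symbol)
      (i : LocalName) (S : MId) (mt : Option Mor) (σ : List Assignment),
      Extends (TG ++ [Module.thy T mtT (θ ++ [Symbol.struct i S mt σ])]) (.struc T i) S T σ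
        (fun a => TG ++ [Module.thy T mtT (θ ++ [Symbol.struct i S mt (σ ++ [a])])])

/-- `⊢ TG`: well-formed theory graphs relative to a foundation `F`
(rules TGemptygraph, TGemptytheory, TGemptyviewmapall, TGemptyview, TGsymbol,
TGemptyimportmapall, TGemptyimport, TGinstsymb, TGhidesymb, TGinstimp). -/
inductive WF (F : Foundation) : TheoryGraph → Prop where
  | empty : WF F []
  | addThy : ∀ (TG : TheoryGraph) (T : MId) (mt : Option MId),
      WF F TG → (∀ M, mt = some M → ∃ θ, ElabThy TG M θ) →
      WF F (TG ++ [Module.thy T mt []])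
  | addViewDef : ∀ (TG : TheoryGraph) (v S T : MId) (μ : Mor),
      WF F TG → Morphism TG μ S T →
      WF F (TG ++ [Module.viewDef v S T μ])
  | addView : ∀ (TG : TheoryGraph) (v S T : MId) (mt : Option Mor),
      WF F TG → (∃ θ, ElabThy TG S θ) → (∃ θ, ElabThy TG T θ) →
      (∀ μ, mt = some μ → ∃ M, HasMeta TG S M ∧ Morphism TG μ M T) →
      (∀ M, HasMeta TG S M → ∃ μ, mt = some μ) →
      WF F (TG ++ [Module.view v S T mt []])
  | addConst : ∀ (TG : TheoryGraph) (T : MId) (mt : Option MId) (θ : List Symbol)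
      (c : LocalName) (τ δ : Option Term),
      WF F (TG ++ [Module.thy T mt θ]) →
      (∀ t, τ = some t → WFTerm (TG ++ [Module.thy T mt θ]) T [] t) →
      (∀ d, δ = some d → WFTerm (TG ++ [Module.thy T mt θ]) T [] d) →
      F.typed (TG ++ [Module.thy T mt θ]) T [] δ τ →
      WF F (TG ++ [Module.thy T mt (θ ++ [Symbol.const c τ δ])])
  | addStrDef : ∀ (TG : TheoryGraph) (T : MId) (mt : Option MId) (θ : List Symbol)
      (i : LocalName) (S : MId) (μ : Mor),
      WF F (TG ++ [Module.thy T mt θ]) →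
      Morphism (TG ++ [Module.thy T mt θ]) μ S T →
      WF F (TG ++ [Module.thy T mt (θ ++ [Symbol.structDef i S μ])])
  | addStr : ∀ (TG : TheoryGraph) (T : MId) (mt : Option MId) (θ : List Symbol)
      (i : LocalName) (S : MId) (smt : Option Mor),
      WF F (TG ++ [Module.thy T mt θ]) →
      (∃ θS, ElabThy (TG ++ [Module.thy T mt θ]) S θS) →
      (∀ μ, smt = some μ → ∃ M, HasMeta (TG ++ [Module.thy T mt θ]) S M ∧
          Morphism (TG ++ [Module.thy T mt θ]) μ M T) →
      (∀ M, HasMeta (TG ++ [Module.thy T mt θ]) S M → ∃ μ, smt = some μ) →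
      WF F (TG ++ [Module.thy T mt (θ ++ [Symbol.struct i S smt []])])
  | addConAss : ∀ (TG : TheoryGraph) (l : LinkId) (S T : MId) (σ : List Assignment)
      (ext : Assignment → TheoryGraph) (c : LocalName) (τ : Option Term) (δ : Term),
      WF F TG → Extends TG l S T σ ext →
      ElabSym TG S c τ none →
      WFTerm TG T [] δ →
      F.typed TG T [] (some δ) (morAppO τ (Mor.link l)) →
      WF F (ext (Assignment.constAss c δ))
  | hideConAss : ∀ (TG : TheoryGraph) (l : LinkId) (S T : MId) (σ : List Assignment)
      (ext : Assignment → TheoryGraph) (c : LocalName) (τ : Option Term) (δ : Term),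
      WF F TG → Extends TG l S T σ ext →
      ElabSym TG S c τ (some δ) →
      WF F (ext (Assignment.constAss c Term.hidden))
  | addStrAss : ∀ (TG : TheoryGraph) (l : LinkId) (S T : MId) (σ : List Assignment)
      (ext : Assignment → TheoryGraph) (h : LocalName) (R : MId) (B : LinkBody) (μ : Mor),
      WF F TG → Extends TG l S T σ ext →
      ElabLink TG (.struc S h) R S B →
      Morphism TG μ R T →
      (∀ M μ', HasMeta TG R M → HasMetaMor TG (.struc S h) μ' →
          MorEq F TG μ (Mor.comp μ' (Mor.link l)) M T) →
      (∀ c τ' δ, ElabSym TG S (h ++ c) τ' (some δ) →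
          F.equal TG T [] (some (Term.morApp δ (Mor.link l)))
            (some (Term.morApp (Term.const R c) μ))) →
      WF F (ext (Assignment.structAss h μ))

/-! ### The structural foundation -/

/-- The structural foundation: typing and equality always hold. -/
def structuralFoundation : Foundation :=
  { typed := fun _ _ _ _ _ => True
    equal := fun _ _ _ _ _ => True }

/-- A theory graph is structurally well-formed if it is clash-free and well-formed
relative to the structural foundation. -/
def StructurallyWF (TG : TheoryGraph) : Prop :=
  ClashFree TG ∧ WF structuralFoundation TG

/-! ### Structural and semantic equivalence -/

/-- Structural equivalence of theory graphs: same theories (with the same meta-theories),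
same links, and same induced constants. -/
def StructEquiv (TG TG' : TheoryGraph) : Prop :=
  (∀ T, (∃ θ, ElabThy TG T θ) ↔ (∃ θ, ElabThy TG' T θ)) ∧
  (∀ T M, (∃ θ, ElabThy TG T θ) → (HasMeta TG T M ↔ HasMeta TG' T M)) ∧
  (∀ l S T, (∃ B, ElabLink TG l S T B) ↔ (∃ B, ElabLink TG' l S T B)) ∧
  (∀ T c, (∃ τ δ, ElabSym TG T c τ δ) ↔ (∃ τ δ, ElabSym TG' T c τ δ))

/-- Semantic equivalence of theory graphs: structural equivalence, and corresponding
constants have equal normalized types and definientia (normal forms computed in the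
respective graphs) and corresponding link assignments have equal normalized definientia. -/
def SemEquiv (TG TG' : TheoryGraph) : Prop :=
  StructEquiv TG TG' ∧
  (∀ T c τ δ τ' δ', ElabSym TG T c τ δ → ElabSym TG' T c τ' δ' →
    (∀ n n', NormalO TG δ n → NormalO TG' δ' n' → n = n') ∧
    (∀ n n', NormalO TG τ n → NormalO TG' τ' n' → n = n')) ∧
  (∀ l c δ δ', ElabAss TG l c δ → ElabAss TG' l c δ' →
    ∀ n n', Normal TG δ n → Normal TG' δ' n' → n = n')


mutual
/-- Well-formed contexts, relative to a foundation `F` (the rules do not refer to `F`). -/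
inductive WFCtxF (F : Foundation) (TG : TheoryGraph) : MId → Ctx → Prop where
  | nil : ∀ T : MId, (∃ θ, ElabThy TG T θ) → WFCtxF F TG T []
  | cons : ∀ (T : MId) (Γ : Ctx) (x : String) (tp df : Option Term),
      WFCtxF F TG T Γ →
      (∀ t, tp = some t → WFTermF F TG T Γ t) →
      (∀ d, df = some d → WFTermF F TG T Γ d) →
      WFCtxF F TG T (Γ ++ [(x, tp, df)])

/-- The judgment `ω` is structurally well-formed over `TG`, `T`, and `Γ`, stated
relative to a fixed foundation `F` (as all MMT judgments are); its rules TOvar, TOsym,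
TOspecial, TOapp, TObind, TOmor, TOmeta do not refer to the typing or equality judgments
of `F`. -/
inductive WFTermF (F : Foundation) (TG : TheoryGraph) : MId → Ctx → Term → Prop where
  | var : ∀ (T : MId) (Γ : Ctx) (x : String) (tp df : Option Term),
      WFCtxF F TG T Γ → (x, tp, df) ∈ Γ → WFTermF F TG T Γ (Term.var x)
  | sym : ∀ (T : MId) (Γ : Ctx) (c : LocalName) (τ δ : Option Term),
      WFCtxF F TG T Γ → ElabSym TG T c τ δ → WFTermF F TG T Γ (Term.const T c)
  | special : ∀ (T : MId) (Γ : Ctx), WFCtxF F TG T Γ → WFTermF F TG T Γ Term.hidden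
  | app : ∀ (T : MId) (Γ : Ctx) (f a : Term),
      WFTermF F TG T Γ f → WFTermF F TG T Γ a → WFTermF F TG T Γ (Term.app f a)
  | bind : ∀ (T : MId) (Γ : Ctx) (b : Term) (x : String) (tp df : Option Term) (s : Term),
      WFTermF F TG T Γ b → WFCtxF F TG T (Γ ++ [(x, tp, df)]) →
      WFTermF F TG T (Γ ++ [(x, tp, df)]) s →
      WFTermF F TG T Γ (Term.bind b x tp df s)
  | mor : ∀ (T : MId) (Γ : Ctx) (S : MId) (ω : Term) (μ : Mor),
      WFCtxF F TG T Γ → WFTermF F TG S [] ω → Morphism TG μ S T →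
      WFTermF F TG T Γ (Term.morApp ω μ)
  | meta_ : ∀ (T : MId) (Γ : Ctx) (M : MId) (ω : Term),
      WFTermF F TG M Γ ω → HasMeta TG T M → WFTermF F TG T Γ ω
end

/-! The structural foundation accepts every typing and equality judgment, so any derivation of
`⊢ TG` relative to some foundation is also one relative to it. The rules for structurally
well-formed terms never consult the foundation, so their derivations transfer verbatim. -/

section FoundationMono

variable {F F' : Foundation}
  (hequal : ∀ TG T Γ ω ω', F.equal TG T Γ ω ω' → F'.equal TG T Γ ω ω')

include hequal in
theorem MorEq.mono {TG : TheoryGraph} {μ μ' : Mor} {S T : MId} (h : MorEq F TG μ μ' S T) :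
    MorEq F' TG μ μ' S T := by
  induction h with
  | mk S T hμ hμ' hconst _ ih =>
    exact .mk μ μ' S T hμ hμ' (fun c τ hc => hequal _ _ _ _ _ (hconst c τ hc)) ih

variable (htyped : ∀ TG T Γ ω ω', F.typed TG T Γ ω ω' → F'.typed TG T Γ ω ω')

include hequal htyped in
theorem WF.mono {TG : TheoryGraph} (h : WF F TG) : WF F' TG := by
  induction h with
  | empty => exact .empty
  | addThy TG T mt _ hmt ih => exact .addThy TG T mt ih hmt
  | addViewDef TG v S T μ _ hμ ih => exact .addViewDef TG v S T μ ih hμ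
  | addView TG v S T mt _ hS hT hmt hmeta ih => exact .addView TG v S T mt ih hS hT hmt hmeta
  | addConst TG T mt θ c τ δ _ hτ hδ hty ih =>
    exact .addConst TG T mt θ c τ δ ih hτ hδ (htyped _ _ _ _ _ hty)
  | addStrDef TG T mt θ i S μ _ hμ ih => exact .addStrDef TG T mt θ i S μ ih hμ
  | addStr TG T mt θ i S smt _ hS hsmt hmeta ih =>
    exact .addStr TG T mt θ i S smt ih hS hsmt hmeta
  | addConAss TG l S T σ ext c τ δ _ hext hc hδ hty ih =>
    exact .addConAss TG l S T σ ext c τ δ ih hext hc hδ (htyped _ _ _ _ _ hty)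
  | hideConAss TG l S T σ ext c τ δ _ hext hc ih =>
    exact .hideConAss TG l S T σ ext c τ δ ih hext hc
  | addStrAss TG l S T σ ext h R B μ _ hext hh hμ hmeta heq ih =>
    exact .addStrAss TG l S T σ ext h R B μ ih hext hh hμ
      (fun M μ' hM hμ' => (hmeta M μ' hM hμ').mono hequal)
      (fun c τ δ hc => hequal _ _ _ _ _ (heq c τ δ hc))

end FoundationMono

theorem WF.structural {F : Foundation} {TG : TheoryGraph} (h : WF F TG) :
    WF structuralFoundation TG :=
  h.mono (fun _ _ _ _ _ _ => trivial) (fun _ _ _ _ _ _ => trivial)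

mutual
theorem WFCtxF.changeFoundation {F F' : Foundation} {TG : TheoryGraph} {T : MId} {Γ : Ctx} :
    WFCtxF F TG T Γ → WFCtxF F' TG T Γ
  | .nil T hT => .nil T hT
  | .cons T Γ x tp df hΓ htp hdf =>
    .cons T Γ x tp df hΓ.changeFoundation (fun t ht => (htp t ht).changeFoundation)
      (fun d hd => (hdf d hd).changeFoundation)

theorem WFTermF.changeFoundation {F F' : Foundation} {TG : TheoryGraph} {T : MId} {Γ : Ctx}
    {ω : Term} : WFTermF F TG T Γ ω → WFTermF F' TG T Γ ω
  | .var T Γ x tp df hΓ hx => .var T Γ x tp df hΓ.changeFoundation hx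
  | .sym T Γ c τ δ hΓ hc => .sym T Γ c τ δ hΓ.changeFoundation hc
  | .special T Γ hΓ => .special T Γ hΓ.changeFoundation
  | .app T Γ f a hf ha => .app T Γ f a hf.changeFoundation ha.changeFoundation
  | .bind T Γ b x tp df s hb hΓx hs =>
    .bind T Γ b x tp df s hb.changeFoundation hΓx.changeFoundation hs.changeFoundation
  | .mor T Γ S ω μ hΓ hω hμ => .mor T Γ S ω μ hΓ.changeFoundation hω.changeFoundation hμ
  | .meta_ T Γ M ω hω hM => .meta_ T Γ M ω hω.changeFoundation hM
end

/-- (a) If a theory graph is well-formed relative to any foundation,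
then it is structurally well-formed. (b) If `TG` is structurally well-formed, then the
judgment '`ω` is a structurally well-formed term over `TG` and `T`' is independent of
the foundation. -/
theorem structurally_wf_foundation_independent :
    (∀ (F : Foundation) (TG : TheoryGraph), ClashFree TG → WF F TG →
      StructurallyWF TG) ∧
    (∀ TG : TheoryGraph, StructurallyWF TG →
      ∀ (F F' : Foundation) (T : MId) (Γ : Ctx) (ω : Term),
        WFTermF F TG T Γ ω ↔ WFTermF F' TG T Γ ω) :=
  ⟨fun _ _ hclash hwf => ⟨hclash, hwf.structural⟩,
    fun _ _ _ _ _ _ _ => ⟨WFTermF.changeFoundation, WFTermF.changeFoundation⟩⟩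

end MMT
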